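/- Let θ = 1/r with r a positive integer, and let p_n be a monic polynomial of degree n. Then p_n satisfies ∫_0^∞ p_n(x) x^{kθ} w(x) dx = 0 for all k = 0,1,...,n-1 if and only if for every i = 1,...,r and every k = 0,...,⌊(n-i)/r⌋ one has ∫_0^∞ p_n(x) x^k w_i(x) dx = 0, where w_i(x) = x^{(i-1)θ} w(x). -/

import Mathlib

/-!
Writing `m = k r + (i - 1)` with `1 ≤ i ≤ r`, we have `x ^ (m / r) = x ^ k * x ^ ((i - 1) / r)` on
`(0, ∞)`, and `m < n` exactly when `k ≤ ⌊(n - i) / r⌋`; so both sides list the same integrals.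
-/

open MeasureTheory

theorem Nat.forall_lt_iff_forall_mul_add_sub_one {r n : ℕ} (hr : 0 < r) {P : ℕ → Prop} :
    (∀ m < n, P m) ↔ ∀ i, 1 ≤ i → i ≤ r → ∀ k, k * r + i ≤ n → P (k * r + (i - 1)) := by
  refine ⟨fun h i hi _ k hk => h _ (by omega), fun h m hm => ?_⟩
  have hdecomp : m / r * r + (m % r + 1 - 1) = m := by
    rw [Nat.add_sub_cancel, mul_comm, Nat.div_add_mod]
  have hmod : m % r < r := Nat.mod_lt m hr
  simpa only [hdecomp] using h (m % r + 1) (by omega) hmod (m / r) (by omega)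

theorem Int.natCast_le_floor_sub_div_iff {r n i k : ℕ} (hr : 0 < r) :
    (k : ℤ) ≤ ⌊((n : ℝ) - i) / r⌋ ↔ k * r + i ≤ n := by
  rw [Int.le_floor, Int.cast_natCast, le_div_iff₀ (Nat.cast_pos.mpr hr), le_sub_iff_add_le,
    ← Nat.cast_mul, ← Nat.cast_add, Nat.cast_le]

theorem Real.rpow_natCast_mul_add_mul_one_div {x : ℝ} (hx : 0 < x) {r : ℕ} (hr : r ≠ 0)
    (k j : ℕ) :
    x ^ (((k * r + j : ℕ) : ℝ) * (1 / r)) = x ^ k * x ^ ((j : ℝ) * (1 / r)) := by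
  have hexp : ((k * r + j : ℕ) : ℝ) * (1 / r) = k + j * (1 / r) := by
    push_cast
    field_simp
  rw [hexp, Real.rpow_add hx, Real.rpow_natCast]

theorem stmt_0_general (r n : ℕ) (hr : 0 < r) (w : ℝ → ℝ) (p : Polynomial ℝ) :
    (∀ k : ℕ, k < n →
        ∫ x in Set.Ioi (0 : ℝ), p.eval x * x ^ ((k : ℝ) * (1 / (r : ℝ))) * w x = 0) ↔
      (∀ i : ℕ, 1 ≤ i → i ≤ r → ∀ k : ℕ, (k : ℤ) ≤ ⌊((n : ℝ) - (i : ℝ)) / (r : ℝ)⌋ →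
        ∫ x in Set.Ioi (0 : ℝ),
          p.eval x * x ^ k * (x ^ (((i : ℝ) - 1) * (1 / (r : ℝ))) * w x) = 0) := by
  rw [Nat.forall_lt_iff_forall_mul_add_sub_one hr]
  refine forall_congr' fun i => forall_congr' fun hi => forall_congr' fun _ =>
    forall_congr' fun k => ?_
  have hweight : ∫ x in Set.Ioi (0 : ℝ),
        p.eval x * x ^ (((k * r + (i - 1) : ℕ) : ℝ) * (1 / (r : ℝ))) * w x
      = ∫ x in Set.Ioi (0 : ℝ),
          p.eval x * x ^ k * (x ^ (((i : ℝ) - 1) * (1 / (r : ℝ))) * w x) := by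
    refine setIntegral_congr_fun measurableSet_Ioi fun x hx => ?_
    rw [Real.rpow_natCast_mul_add_mul_one_div hx hr.ne', Nat.cast_sub hi, Nat.cast_one]
    ring
  rw [Int.natCast_le_floor_sub_div_iff hr, hweight]

/-- Biorthogonality conditions with respect to powers `x^(kθ)`, `θ = 1/r`, are
equivalent to multiple orthogonality conditions with respect to the weights
`w_i(x) = x^((i-1)θ) w(x)`, `i = 1, …, r`. -/
theorem stmt_0 (r n : ℕ) (hr : 0 < r) (w : ℝ → ℝ) (p : Polynomial ℝ)
    (hp : p.Monic) (hdeg : p.natDegree = n) :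
    (∀ k : ℕ, k < n →
        ∫ x in Set.Ioi (0 : ℝ), p.eval x * x ^ ((k : ℝ) * (1 / (r : ℝ))) * w x = 0) ↔
      (∀ i : ℕ, 1 ≤ i → i ≤ r → ∀ k : ℕ, (k : ℤ) ≤ ⌊((n : ℝ) - (i : ℝ)) / (r : ℝ)⌋ →
        ∫ x in Set.Ioi (0 : ℝ),
          p.eval x * x ^ k * (x ^ (((i : ℝ) - 1) * (1 / (r : ℝ))) * w x) = 0) :=
  stmt_0_general r n hr w p
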